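/- arXiv:1702.07589 — 2 statements merged into one kernel-verified Lean document; each statement's English description precedes it below -/
import Mathlib

section
/- Let G be a map on an orientable surface of genus g with a fixed reference orientation, let F* be the set of counterclockwise facial walks of the dual map G*, and let {B*_1,…,B*_{2g}} be a set of cycles of G* forming a homology-basis. For two flows φ, φ' ∈ ℤ^E of G, the following are equivalent: (1) φ and φ' are homologous; (2) β(φ,W) = β(φ',W) for every closed walk W of G*; (3) β(φ,F) = β(φ',F) for every F ∈ F* and β(φ,B*_i) = β(φ',B*_i) for every 1 ≤ i ≤ 2g. -/
/-
Common combinatorial framework.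

Maps on compact orientable surfaces are formalized as rotation systems
(combinatorial maps): a finite set of darts together with a permutation `σ`
(counterclockwise successor around each vertex) and a fixed-point-free
involution `α` (reversal of darts).  Vertices are the orbits of `σ`, edges the
orbits of `α`, and the (counterclockwise) facial walks are the orbits of
`σ⁻¹ * α`.  The genus is recovered from the Euler characteristic.

Homology of the map is formalized by flows: integer-valued functions on darts;
the subgroup generated by the facial flows plays the role of the boundary
subgroup, two flows being homologous when their difference belongs to it.
Contractibility is formalized combinatorially: null-homotopy of closed walks is
generated by insertion/deletion of spurs and of facial boundaries (and rotation
of the base point).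

Schnyder woods are formalized by their angle labellings (corners ≃ darts, the
corner of dart `d` being the corner between `d` and `σ d` at the tail of `d`);
this follows the paper, where (generalized) Schnyder woods are exactly the
EDGE, ℕ*-VERTEX, ℕ*-FACE angle labellings, and where around an edge `{d, α d}`
the four corners in clockwise order are `d, σ⁻¹ (α d), α d, σ⁻¹ d`.
-/

noncomputable section
open scoped Classical

namespace Schnyder

/-- The setoid whose classes are the orbits (cycles) of a permutation;
for the vertex rotation `σ` the classes are the vertices of the map, for the
edge involution `α` they are the edges, for the face permutation they are the
faces. -/
def permSetoid {X : Type*} (f : Equiv.Perm X) : Setoid X where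
  r := f.SameCycle
  iseqv := ⟨fun x => ⟨0, by simp⟩, fun h => h.symm, fun h h' => h.trans h'⟩

/-- The number of orbits of a permutation. -/
def numOrbits {X : Type*} (f : Equiv.Perm X) : ℕ :=
  Nat.card (Quotient (permSetoid f))

/-- `ccwSector σ x y d` : rotating counterclockwise (iterating `σ`) from the dart
`x`, the dart `d` is met strictly after `x` and before the first occurrence of
`y`; i.e. `d` lies in the counterclockwise sector from `x` to `y` (both
excluded). -/
def ccwSector {X : Type*} (σ : Equiv.Perm X) (x y d : X) : Prop :=
  ∃ k : ℕ, 0 < k ∧ (σ ^ k) x = d ∧ ∀ l : ℕ, 0 < l → l ≤ k → (σ ^ l) x ≠ y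

def cyclicNext {n : ℕ} (h : 0 < n) (k : Fin n) : Fin n :=
  ⟨((k : ℕ) + 1) % n, Nat.mod_lt _ h⟩

def cyclicPrev {n : ℕ} (h : 0 < n) (k : Fin n) : Fin n :=
  ⟨((k : ℕ) + (n - 1)) % n, Nat.mod_lt _ h⟩

/-- The face permutation: its orbits are the (counterclockwise) facial walks of
the map with vertex rotation `σ` and edge involution `α`. -/
def fperm {X : Type*} (σ α : Equiv.Perm X) : Equiv.Perm X := σ⁻¹ * α

/-- A closed walk in the map with vertex rotation `σ` and edge involution `α`:
a cyclic sequence of darts, consecutive darts being chained head-to-tail. -/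
structure CWalk {X : Type*} (σ α : Equiv.Perm X) where
  n : ℕ
  pos : 0 < n
  darts : Fin n → X
  chain : ∀ k : Fin n, σ.SameCycle (α (darts k)) (darts (cyclicNext pos k))

namespace CWalk

variable {X : Type*} {σ α : Equiv.Perm X}

/-- The characteristic flow of a closed walk. -/
def flow (W : CWalk σ α) : X → ℤ := fun d =>
  ∑ k : Fin W.n, ((if W.darts k = d then (1 : ℤ) else 0) - (if W.darts k = α d then 1 else 0))

/-- A closed walk is a cycle when it passes at most once through each vertex. -/
def IsCycle (W : CWalk σ α) : Prop :=
  ∀ k k' : Fin W.n, σ.SameCycle (W.darts k) (W.darts k') → k = k'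

def Mem (W : CWalk σ α) (d : X) : Prop := ∃ k, W.darts k = d

/-- Two closed walks intersect when they share a vertex. -/
def Intersects (W W' : CWalk σ α) : Prop :=
  ∃ k k', σ.SameCycle (W.darts k) (W'.darts k')

/-- `W'` is obtained from `W` by reversing all its edges. -/
def IsReversal (W W' : CWalk σ α) : Prop := ∀ d, W.Mem d ↔ W'.Mem (α d)

/-- Two closed walks use exactly the same darts. -/
def SameSupport (W W' : CWalk σ α) : Prop := ∀ d, W.Mem d ↔ W'.Mem d

/-- Edge-disjointness of two closed walks. -/
def EdgeDisjoint (W W' : CWalk σ α) : Prop :=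
  ∀ d, W.Mem d → ¬ W'.Mem d ∧ ¬ W'.Mem (α d)

/-- The list of darts of a closed walk. -/
def toList (W : CWalk σ α) : List X := List.ofFn W.darts

end CWalk

/-- Two (monochromatic) cycles cross when they intersect and are not reversal
of each other. -/
def CrossingCycles {X : Type*} {σ α : Equiv.Perm X} (W W' : CWalk σ α) : Prop :=
  W.Intersects W' ∧ ¬ W.IsReversal W'

/-- The characteristic flow of the counterclockwise facial walk of the face of
the dart `d0`. -/
def faceFlow {X : Type*} (σ α : Equiv.Perm X) (d0 : X) : X → ℤ := fun d =>
  (if (fperm σ α).SameCycle d0 d then (1 : ℤ) else 0)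
    - (if (fperm σ α).SameCycle d0 (α d) then 1 else 0)

/-- The subgroup `𝔽` of flows generated by the (counterclockwise) facial walks. -/
def facialSubgroup {X : Type*} (σ α : Equiv.Perm X) : AddSubgroup (X → ℤ) :=
  AddSubgroup.closure (Set.range (faceFlow σ α))

/-- Two flows are homologous when their difference belongs to `𝔽`. -/
def Homologous {X : Type*} (σ α : Equiv.Perm X) (f g : X → ℤ) : Prop :=
  f - g ∈ facialSubgroup σ α

/-- Two flows are reversely homologous when their sum belongs to `𝔽`. -/
def ReverselyHomologous {X : Type*} (σ α : Equiv.Perm X) (f g : X → ℤ) : Prop :=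
  f + g ∈ facialSubgroup σ α

/-- Two flows are weakly homologous when they are homologous or reversely
homologous. -/
def WeaklyHomologous {X : Type*} (σ α : Equiv.Perm X) (f g : X → ℤ) : Prop :=
  Homologous σ α f g ∨ ReverselyHomologous σ α f g

/-- Antisymmetric dart functions: the flows `ℤ^E` of the paper (with respect to
the reference orientation given by the darts). -/
def IsFlow {X : Type*} (α : Equiv.Perm X) (f : X → ℤ) : Prop := ∀ d, f (α d) = - f d

/-- A finite family of closed walks is a homology-basis when its classes
generate the first homology group: every closed walk equals, modulo the facial
subgroup, an integer combination of the family. -/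
def IsHomologyBasis {X : Type*} (σ α : Equiv.Perm X) {ι : Type*} [Fintype ι]
    (B : ι → CWalk σ α) : Prop :=
  ∀ W : CWalk σ α, ∃ μ : ι → ℤ, W.flow - ∑ i, μ i • (B i).flow ∈ facialSubgroup σ α

/-- `F` is the complete boundary list of one face (starting anywhere on it). -/
def IsFaceBoundary {X : Type*} (σ α : Equiv.Perm X) (F : List X) : Prop :=
  ∃ (d : X) (k : ℕ), 0 < k ∧ ((fperm σ α) ^ k) d = d ∧
    (∀ i : ℕ, 0 < i → i < k → ((fperm σ α) ^ i) d ≠ d) ∧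
    F = (List.range k).map fun i => ((fperm σ α) ^ i) d

/-- Elementary combinatorial homotopy moves on closed walks: deletion of a
spur, deletion of a facial boundary, rotation of the base point. -/
inductive HomotopyStep {X : Type*} (σ α : Equiv.Perm X) : List X → List X → Prop
  | spur (W₁ W₂ : List X) (d : X) : HomotopyStep σ α (W₁ ++ d :: α d :: W₂) (W₁ ++ W₂)
  | face (W₁ W₂ F : List X) (hF : IsFaceBoundary σ α F) :
      HomotopyStep σ α (W₁ ++ F ++ W₂) (W₁ ++ W₂)
  | rot (d : X) (W : List X) : HomotopyStep σ α (d :: W) (W ++ [d])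

/-- A closed walk (given by its dart list) is contractible when it is
null-homotopic. -/
def NullHomotopic {X : Type*} (σ α : Equiv.Perm X) (W : List X) : Prop :=
  Relation.EqvGen (HomotopyStep σ α) W []

/-! ### Schnyder angle labellings -/

/-- The EDGE pattern on the four corner labels in clockwise order around an
edge: either all four labels are equal (type 0 edge), or they are cyclically
`i-1, i, i, i+1` for some colour `i` (type 1 and type 2 edges). -/
def edgePattern (x : Fin 4 → ZMod 3) : Prop :=
  (∀ k, x k = x 0) ∨
    ∃ (i : ZMod 3) (j : Fin 4), x j = i - 1 ∧ x (j + 1) = i ∧ x (j + 2) = i ∧ x (j + 3) = i + 1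

/-- The EDGE condition at the edge `{d, α d}`: in clockwise order around the
edge, the four incident corners are `d, σ⁻¹ (α d), α d, σ⁻¹ d`. -/
def EdgeCond {X : Type*} (σ α : Equiv.Perm X) (lab : X → ZMod 3) (d : X) : Prop :=
  edgePattern ![lab d, lab (σ⁻¹ (α d)), lab (α d), lab (σ⁻¹ d)]

/-- An EDGE angle labelling (= Schnyder labelling). -/
def IsSchnyderLabeling {X : Type*} (σ α : Equiv.Perm X) (lab : X → ZMod 3) : Prop :=
  ∀ d, EdgeCond σ α lab d

/-- ℕ*-VERTEX (in presence of the EDGE condition): no vertex has all its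
corners of the same colour. -/
def VertexNonconstant {X : Type*} (σ : Equiv.Perm X) (lab : X → ZMod 3) : Prop :=
  ∀ d, ∃ d', σ.SameCycle d d' ∧ lab d' ≠ lab d

/-- ℕ*-FACE (in presence of the EDGE condition): no face has all its corners of
the same colour. -/
def FaceNonconstant {X : Type*} (σ α : Equiv.Perm X) (lab : X → ZMod 3) : Prop :=
  ∀ d, ∃ d', (fperm σ α).SameCycle d d' ∧ lab d' ≠ lab d

/-- A (generalized) Schnyder wood, presented by its angle labelling: an EDGE,
ℕ*-VERTEX, ℕ*-FACE angle labelling (on the torus this is exactly a toroidal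
Schnyder wood). -/
def IsSchnyderWood {X : Type*} (σ α : Equiv.Perm X) (lab : X → ZMod 3) : Prop :=
  IsSchnyderLabeling σ α lab ∧ VertexNonconstant σ lab ∧ FaceNonconstant σ α lab

/-- The dart `d` carries the outgoing direction of colour `i` of its edge:
its two adjacent corners at its tail are labelled `i - 1` (counterclockwise
side) and `i + 1` (clockwise side). -/
def OutDart {X : Type*} (σ : Equiv.Perm X) (lab : X → ZMod 3) (i : ZMod 3) (d : X) : Prop :=
  lab d = i - 1 ∧ lab (σ⁻¹ d) = i + 1

/-- A monochromatic cycle of colour `i` (an `i`-cycle): a directed cycle all of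
whose darts are outgoing of colour `i`. -/
def IsMonoCycle {X : Type*} (σ α : Equiv.Perm X) (lab : X → ZMod 3) (i : ZMod 3)
    (C : CWalk σ α) : Prop :=
  C.IsCycle ∧ ∀ k, OutDart σ lab i (C.darts k)

/-- Half-crossing Schnyder wood: some pair of monochromatic cycles of different
colours cross. -/
def HalfCrossingSW {X : Type*} (σ α : Equiv.Perm X) (lab : X → ZMod 3) : Prop :=
  ∃ (i j : ZMod 3) (C C' : CWalk σ α), i ≠ j ∧ IsMonoCycle σ α lab i C ∧
    IsMonoCycle σ α lab j C' ∧ CrossingCycles C C'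

/-- `i`-crossing Schnyder wood: every `i`-cycle crosses every monochromatic
cycle of any other colour. -/
def ICrossingSW {X : Type*} (σ α : Equiv.Perm X) (lab : X → ZMod 3) (i : ZMod 3) : Prop :=
  ∀ (j : ZMod 3) (C C' : CWalk σ α), j ≠ i → IsMonoCycle σ α lab i C →
    IsMonoCycle σ α lab j C' → CrossingCycles C C'

/-- Intersecting Schnyder wood. -/
def IntersectingSW {X : Type*} (σ α : Equiv.Perm X) (lab : X → ZMod 3) : Prop :=
  ∀ (i : ZMod 3) (C : CWalk σ α), IsMonoCycle σ α lab i C →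
    (∃ C', IsMonoCycle σ α lab (i - 1) C' ∧ C.Intersects C') ∧
    (∃ C', IsMonoCycle σ α lab (i + 1) C' ∧ C.Intersects C')

/-- Crossing Schnyder wood. -/
def CrossingSW {X : Type*} (σ α : Equiv.Perm X) (lab : X → ZMod 3) : Prop :=
  ∀ (i : ZMod 3) (C : CWalk σ α), IsMonoCycle σ α lab i C →
    (∃ C', IsMonoCycle σ α lab (i - 1) C' ∧ CrossingCycles C C') ∧
    (∃ C', IsMonoCycle σ α lab (i + 1) C' ∧ CrossingCycles C C')

/-! ### Combinatorial maps -/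

/-- A map on a compact orientable surface, as a rotation system: finitely many
darts, vertex rotation `σ` (counterclockwise), fixed-point-free edge involution
`α`; connectedness makes the embedding cellular. -/
structure CombMap where
  D : Type
  fin : Fintype D
  σ : Equiv.Perm D
  α : Equiv.Perm D
  α_invol : ∀ d, α (α d) = d
  α_fixfree : ∀ d, α d ≠ d
  connected : ∀ d d', Relation.EqvGen (fun a b => b = σ a ∨ b = α a) d d'

attribute [instance] CombMap.fin

namespace CombMap

variable (M : CombMap)

def facePerm : Equiv.Perm M.D := fperm M.σ M.α

abbrev SameVertex (d d' : M.D) : Prop := M.σ.SameCycle d d'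

abbrev SameFace (d d' : M.D) : Prop := M.facePerm.SameCycle d d'

/-- Closed walks of the (primal) map. -/
abbrev ClosedWalk := CWalk M.σ M.α

/-- Closed walks of the dual map (dual vertices = faces of `M`). -/
abbrev DualClosedWalk := CWalk M.facePerm M.α

/-- Euler characteristic `V - E + F`; it equals `2 - 2g` where `g` is the genus
of the surface. -/
def eulerChar : ℤ :=
  (numOrbits M.σ : ℤ) - (numOrbits M.α : ℤ) + (numOrbits M.facePerm : ℤ)

/-- A closed walk is `0`-homologous; on the torus a cycle is contractible if
and only if its flow is `0`-homologous. -/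
def FlowContractible (W : M.ClosedWalk) : Prop := W.flow ∈ facialSubgroup M.σ M.α

/-- No contractible loop. -/
def NoContractibleLoop : Prop :=
  ∀ d : M.D, M.SameVertex d (M.α d) → ¬ NullHomotopic M.σ M.α [d]

/-- No homotopic multiple edges: two parallel edges never bound a disk. -/
def NoHomotopicMultiEdges : Prop :=
  ∀ d d' : M.D, M.SameVertex d d' → M.SameVertex (M.α d) (M.α d') →
    NullHomotopic M.σ M.α [d, M.α d'] → d' = d ∨ d' = M.α d

/-- A toroidal map: a map on the torus (Euler characteristic 0) without
contractible loop nor homotopic multiple edges. -/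
def IsToroidal : Prop := M.eulerChar = 0 ∧ M.NoContractibleLoop ∧ M.NoHomotopicMultiEdges

/-- A triangulation: every face has size three. -/
def IsTriangulation : Prop := ∀ d, (M.facePerm ^ 3) d = d ∧ M.facePerm d ≠ d

/-- A simple map: no loops and no multiple edges. -/
def Simple : Prop :=
  (∀ d : M.D, ¬ M.SameVertex d (M.α d)) ∧
    ∀ d d' : M.D, M.SameVertex d d' → M.SameVertex (M.α d) (M.α d') → d' = d ∨ d' = M.α d

/-- The pairing between a flow of `M` and a flow of its dual (the dual dart of
a dart being itself); this is twice the `β` of the paper, which is harmless. -/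
def beta (p q : M.D → ℤ) : ℤ := ∑ d : M.D, p d * q d

/-- The characteristic flow of an oriented subgraph given by a set of darts. -/
def setFlow (S : Set M.D) : M.D → ℤ := fun d =>
  (if d ∈ S then (1 : ℤ) else 0) - (if M.α d ∈ S then 1 else 0)

/-- The darts that are outgoing (in some colour) in a Schnyder wood: the
orientation of the map associated with the Schnyder wood. -/
def outSet (lab : M.D → ZMod 3) : Set M.D := {d | ∃ i, OutDart M.σ lab i d}

/-- The angle labelling of the dual Schnyder wood (the corner of the dual dart
`d` is the corner of `M` labelled by `facePerm d`). -/
def dualLab (lab : M.D → ZMod 3) : M.D → ZMod 3 := fun d => lab (M.facePerm d)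

/-! #### The primal–dual completion `Ĝ` and its orientations

The edges of `Ĝ` are indexed by `M.D × Bool` : `(d, false)` joins the tail
vertex of `d` to the edge-vertex of the edge of `d`, and `(d, true)` joins the
face on the left of `d` to this edge-vertex.  An orientation of `Ĝ` assigns
`true` to an edge when it is oriented from the primal/dual vertex towards the
edge-vertex (an "out-edge"). -/

/-- The orientation of `Ĝ` associated with an angle labelling: an edge of `Ĝ`
is an out-edge exactly when, crossing it counterclockwise around its
primal/dual vertex, the corner label increases by one. -/
def labOrientation (lab : M.D → ZMod 3) : M.D × Bool → Bool := fun x =>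
  if x.2 = false then (if lab x.1 = lab (M.σ⁻¹ x.1) + 1 then true else false)
  else (if lab (M.facePerm x.1) = lab x.1 + 1 then true else false)

/-- A Schnyder orientation of `Ĝ`: an orientation corresponding to a Schnyder
(EDGE) labelling of `M`. -/
def IsSchnyderOrientation (o : M.D × Bool → Bool) : Prop :=
  ∃ lab : M.D → ZMod 3, IsSchnyderLabeling M.σ M.α lab ∧ o = M.labOrientation lab

def outdegPrimal (o : M.D × Bool → Bool) (d0 : M.D) : ℕ :=
  Nat.card {d : M.D // M.SameVertex d0 d ∧ o (d, false) = true}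

def outdegDual (o : M.D × Bool → Bool) (d0 : M.D) : ℕ :=
  Nat.card {d : M.D // M.SameFace d0 d ∧ o (d, true) = true}

def outdegEdge (o : M.D × Bool → Bool) (d0 : M.D) : ℕ :=
  (if o (d0, false) = false then 1 else 0) + (if o (M.α d0, false) = false then 1 else 0) +
    (if o (d0, true) = false then 1 else 0) + (if o (M.α d0, true) = false then 1 else 0)

/-- A `mod₃`-orientation of `Ĝ`: primal- and dual-vertices have outdegree
divisible by 3, edge-vertices have outdegree `1 mod 3`. -/
def IsMod3Orientation (o : M.D × Bool → Bool) : Prop :=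
  (∀ d0, 3 ∣ M.outdegPrimal o d0) ∧ (∀ d0, 3 ∣ M.outdegDual o d0) ∧
    ∀ d0, M.outdegEdge o d0 % 3 = 1

/-- `γ(C)` for a cycle `C` of `M`: the number of edges of `Ĝ` leaving `Ĉ` on
its right minus the number of edges of `Ĝ` leaving `Ĉ` on its left. -/
def gammaPDC (o : M.D × Bool → Bool) (C : M.ClosedWalk) : ℤ :=
  (∑ k : Fin C.n, ∑ d : M.D,
      ((if ccwSector M.σ (M.α (C.darts (cyclicPrev C.pos k))) (C.darts k) d ∧
            o (d, false) = true then (1 : ℤ) else 0) -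
        (if ccwSector M.σ (C.darts k) (M.α (C.darts (cyclicPrev C.pos k))) d ∧
            o (d, false) = true then 1 else 0))) +
    ∑ k : Fin C.n,
      ((if o (M.α (C.darts k), true) = false then (1 : ℤ) else 0) -
        (if o (C.darts k, true) = false then 1 else 0))

/-- A Schnyder wood is balanced when `γ(C) = 0` for every non-contractible
cycle `C` of the map. -/
def BalancedLab (lab : M.D → ZMod 3) : Prop :=
  ∀ C : M.ClosedWalk, C.IsCycle → ¬ M.FlowContractible C →
    M.gammaPDC (M.labOrientation lab) C = 0

/-- `γ(C)` with respect to an orientation of the edges of `M` itself (the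
simplified form of `γ` for triangulations): number of edges of `M` leaving `C`
on its right minus the number leaving `C` on its left. -/
def gammaSet (A : Set M.D) (C : M.ClosedWalk) : ℤ :=
  ∑ k : Fin C.n, ∑ d : M.D,
    ((if ccwSector M.σ (M.α (C.darts (cyclicPrev C.pos k))) (C.darts k) d ∧ d ∈ A
        then (1 : ℤ) else 0) -
      (if ccwSector M.σ (C.darts k) (M.α (C.darts (cyclicPrev C.pos k))) d ∧ d ∈ A
        then 1 else 0))

/-- Balanced Schnyder wood of a toroidal triangulation (via the simplified
`γ` on the edges of `M`). -/
def BalancedTri (lab : M.D → ZMod 3) : Prop :=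
  ∀ C : M.ClosedWalk, C.IsCycle → ¬ M.FlowContractible C →
    M.gammaSet (M.outSet lab) C = 0

/-! #### Orientations of the map itself -/

/-- An orientation of the edges of `M` (one dart chosen per edge). -/
def IsOrientation (A : Set M.D) : Prop := ∀ d, d ∈ A ↔ M.α d ∉ A

/-- The characteristic flow of `D \ D'` for two orientations `A, A'`. -/
def orientDiffFlow (A A' : Set M.D) : M.D → ℤ := fun d =>
  if d ∈ A ∧ d ∉ A' then 1 else if d ∉ A ∧ d ∈ A' then -1 else 0

/-- A `0`-homologous flow is counterclockwise with respect to the face `f0`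
(given by one of its darts) when it is a combination with nonnegative
coefficients of the facial flows of the faces different from `f0`. -/
def CCWFlow (f0 : M.D) (t : M.D → ℤ) : Prop :=
  ∃ c : M.D → ℕ, (∀ d, M.SameFace d f0 → c d = 0) ∧
    t = ∑ d : M.D, (c d : ℤ) • faceFlow M.σ M.α d

def outAt (A : Set M.D) (d0 : M.D) : ℕ :=
  Nat.card {d : M.D // M.SameVertex d0 d ∧ d ∈ A}

/-- A 3-orientation: every vertex has outdegree exactly 3. -/
def IsThreeOrientation (A : Set M.D) : Prop :=
  M.IsOrientation A ∧ ∀ d0, M.outAt A d0 = 3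

/-! #### Middle walks and middle cycles -/

/-- In a 3-orientation `A`, `b` is the middle outgoing edge after `d`: it
leaves the head of `d`, with exactly one outgoing dart strictly on each side of
the path `d, b`. -/
def IsMiddleSucc (A : Set M.D) (d b : M.D) : Prop :=
  b ∈ A ∧ M.σ.SameCycle (M.α d) b ∧
    Nat.card {x : M.D // x ∈ A ∧ ccwSector M.σ (M.α d) b x} = 1 ∧
    Nat.card {x : M.D // x ∈ A ∧ ccwSector M.σ b (M.α d) x} = 1

/-- The middle walk: an infinite sequence of darts, each followed by the middle
outgoing edge at its head. -/
def IsMiddleWalk (A : Set M.D) (w : ℕ → M.D) : Prop :=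
  w 0 ∈ A ∧ ∀ n, M.IsMiddleSucc A (w n) (w (n + 1))

/-- A middle cycle: a directed cycle such that every vertex on it has exactly
one edge leaving on the left of the cycle (and hence exactly one on the
right). -/
def IsMiddleCycle (A : Set M.D) (C : M.ClosedWalk) : Prop :=
  C.IsCycle ∧ (∀ k, C.darts k ∈ A) ∧
    ∀ k, Nat.card {x : M.D // x ∈ A ∧
        ccwSector M.σ (C.darts (cyclicNext C.pos k)) (M.α (C.darts k)) x} = 1 ∧
      Nat.card {x : M.D // x ∈ A ∧
        ccwSector M.σ (M.α (C.darts k)) (C.darts (cyclicNext C.pos k)) x} = 1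

end CombMap

/-! ### Universal covers -/

/-- A universal cover of the map `M`: a connected, simply connected covering of
(maps given by) rotation systems.  `p` commutes with the rotations, is a local
bijection on vertices, the cover is connected, and every closed walk of the
cover is null-homotopic (simple connectivity). -/
structure UniversalCover (M : CombMap) where
  Dc : Type
  σ' : Equiv.Perm Dc
  α' : Equiv.Perm Dc
  α'_invol : ∀ x, α' (α' x) = x
  p : Dc → M.D
  p_surj : Function.Surjective p
  p_σ : ∀ x, p (σ' x) = M.σ (p x)
  p_α : ∀ x, p (α' x) = M.α (p x)
  locInj : ∀ x y, σ'.SameCycle x y → p x = p y → x = y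
  connected : ∀ x y, Relation.EqvGen (fun a b => b = σ' a ∨ b = α' a) x y
  simplyConnected : ∀ W : CWalk σ' α', NullHomotopic σ' α' W.toList

/-- A set of darts closed under the vertex rotation: a set of vertices. -/
def VertexClosed {X : Type*} (σ : Equiv.Perm X) (A : Set X) : Prop :=
  ∀ x y, σ.SameCycle x y → (x ∈ A ↔ y ∈ A)

/-- The set of darts meets at most two vertices. -/
def AtMostTwoVertexClasses {X : Type*} (σ : Equiv.Perm X) (A : Set X) : Prop :=
  ∃ a b : X, ∀ x ∈ A, σ.SameCycle x a ∨ σ.SameCycle x b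

/-- Reachability in the graph of the map avoiding the vertices of `A`. -/
def ReachAvoiding {X : Type*} (σ α : Equiv.Perm X) (A : Set X) : X → X → Prop :=
  Relation.EqvGen fun u v => u ∉ A ∧ v ∉ A ∧ (v = σ u ∨ v = α u)

/-- 3-connectivity of the graph of a (possibly infinite) rotation system: at
least four vertices, and removing any (at most) two vertices leaves it
connected. -/
def ThreeConnectedMap {X : Type*} (σ α : Equiv.Perm X) : Prop :=
  (∃ a b c d : X, ¬σ.SameCycle a b ∧ ¬σ.SameCycle a c ∧ ¬σ.SameCycle a d ∧
      ¬σ.SameCycle b c ∧ ¬σ.SameCycle b d ∧ ¬σ.SameCycle c d) ∧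
    ∀ A : Set X, VertexClosed σ A → AtMostTwoVertexClasses σ A →
      ∀ x y, x ∉ A → y ∉ A → ReachAvoiding σ α A x y

/-- A map is essentially 3-connected when its universal cover is 3-connected. -/
def CombMap.EssentiallyThreeConnected (M : CombMap) : Prop :=
  ∀ U : UniversalCover M, ThreeConnectedMap U.σ' U.α'

/-! ### Miscellaneous helpers -/

/-- The order relation of a distributive lattice structure. -/
def distribLE {T : Type*} (inst : DistribLattice T) : T → T → Prop :=
  (inst.toLattice.toSemilatticeSup.toPartialOrder.toPreorder.toLE).le

/-- The strict order relation of a linear order structure. -/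
def linLT {T : Type*} (L : LinearOrder T) : T → T → Prop :=
  (L.toPartialOrder.toPreorder.toLT).lt

/-- A basic toroidal map: a non-contractible cycle on `n + 1` vertices together
with `n + 1` homologous non-contractible loops, one at each vertex.  Around the
vertex `x`, the counterclockwise order of the darts is: `(x,0)` towards the
next vertex on the cycle, `(x,1)` the loop leaving, `(x,2)` towards the
previous vertex, `(x,3)` the loop returning. -/
def CombMap.IsBasic (M : CombMap) : Prop :=
  ∃ (n : ℕ) (e : M.D ≃ ZMod (n + 1) × Fin 4),
    (∀ (x : ZMod (n + 1)) (j : Fin 4), e (M.σ (e.symm (x, j))) = (x, j + 1)) ∧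
      ∀ x : ZMod (n + 1),
        e (M.α (e.symm (x, 0))) = (x + 1, 2) ∧
        e (M.α (e.symm (x, 2))) = (x - 1, 0) ∧
        e (M.α (e.symm (x, 1))) = (x, 3) ∧
        e (M.α (e.symm (x, 3))) = (x, 1)


/-!
Pair flows of `M` with flows of the dual map by the dot product on darts. A facial flow is the
coboundary of a face indicator, which is constant on the vertices of the dual; so it sums to zero
around every closed dual walk and around every dual face, and homologous flows pair equally with
both. Conversely, if `ψ = φ - φ'` pairs to zero with every closed dual walk, the sum of `ψ` along a
dual walk depends only on its ends; the dual map being connected, this yields a potential `c`,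
constant on faces, with `ψ = c - c ∘ α`, which is an integer combination of facial flows. Finally the
dual faces and a homology basis generate every closed dual walk modulo dual facial flows.
-/

theorem dotProduct_eq_zero_of_mem_closure {X : Type*} [Fintype X] {s : Set (X → ℤ)}
    {p r : X → ℤ} (hp : p ∈ AddSubgroup.closure s) (h : ∀ q ∈ s, q ⬝ᵥ r = 0) :
    p ⬝ᵥ r = 0 := by
  induction hp using AddSubgroup.closure_induction with
  | mem q hq => exact h q hq
  | zero => exact zero_dotProduct r
  | add q q' _ _ hq hq' => rw [add_dotProduct, hq, hq', add_zero]
  | neg q _ hq => rw [neg_dotProduct, hq, neg_zero]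

theorem cyclicNext_eq_finRotate {n : ℕ} (h : 0 < n) : cyclicNext h = finRotate n := by
  obtain ⟨m, rfl⟩ := Nat.exists_eq_add_one_of_ne_zero h.ne'
  ext k
  simp [cyclicNext, Fin.val_add]

section Flows

variable {X : Type*} [Fintype X] {σ α : Equiv.Perm X}

theorem IsFlow.dotProduct_comp (hα : Function.Involutive α) {p : X → ℤ} (hp : IsFlow α p)
    (g : X → ℤ) : p ⬝ᵥ (g ∘ α) = -(p ⬝ᵥ g) := by
  calc p ⬝ᵥ (g ∘ α) = ∑ d, p (α d) * g (α (α d)) := (Equiv.sum_comp α _).symm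
    _ = -(p ⬝ᵥ g) := by simp [dotProduct, hp _, hα _]

theorem IsFlow.dotProduct_sub_comp (hα : Function.Involutive α) {p : X → ℤ} (hp : IsFlow α p)
    (g : X → ℤ) : p ⬝ᵥ (fun d => g d - g (α d)) = 2 * (p ⬝ᵥ g) := by
  rw [show (fun d => g d - g (α d)) = g - g ∘ α from rfl, dotProduct_sub,
    hp.dotProduct_comp hα]
  ring

theorem CWalk.dotProduct_flow (hα : Function.Involutive α) {p : X → ℤ} (hp : IsFlow α p)
    (W : CWalk σ α) : p ⬝ᵥ W.flow = 2 * ∑ k, p (W.darts k) := by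
  simp only [dotProduct, CWalk.flow, Finset.mul_sum, mul_sub, mul_ite, mul_one, mul_zero]
  rw [Finset.sum_comm]
  refine Finset.sum_congr rfl fun k _ => ?_
  simp [Finset.sum_sub_distrib, ← hα.eq_iff, hp _]
  ring

end Flows

theorem CWalk.sum_sub_comp_eq_zero {X : Type*} {σ α : Equiv.Perm X} (W : CWalk σ α)
    {f : X → ℤ} (hf : ∀ x y, σ.SameCycle x y → f x = f y) :
    ∑ k, (f (W.darts k) - f (α (W.darts k))) = 0 := by
  have hnext : ∀ k, f (α (W.darts k)) = f (W.darts (finRotate W.n k)) := fun k => by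
    rw [← cyclicNext_eq_finRotate W.pos]; exact hf _ _ (W.chain k)
  simp only [hnext, Finset.sum_sub_distrib, Equiv.sum_comp (finRotate W.n) (fun k => f (W.darts k)),
    sub_self]

section FaceFlows

variable {X : Type*} {σ α : Equiv.Perm X}

def faceIndicator (σ α : Equiv.Perm X) (a : X) : X → ℤ :=
  fun d => if (fperm σ α).SameCycle a d then 1 else 0

theorem faceFlow_eq_sub (a : X) :
    faceFlow σ α a = fun d => faceIndicator σ α a d - faceIndicator σ α a (α d) := rfl

theorem faceIndicator_eq_of_sameCycle (a : X) {x y : X} (h : (fperm σ α).SameCycle x y) :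
    faceIndicator σ α a x = faceIndicator σ α a y :=
  if_congr ⟨fun h' => h'.trans h, fun h' => h'.trans h.symm⟩ rfl rfl

theorem faceFlow_isFlow (hα : Function.Involutive α) (a : X) : IsFlow α (faceFlow σ α a) := by
  intro d
  simp only [faceFlow_eq_sub, hα d, neg_sub]

variable [Fintype X]

theorem faceFlow_dotProduct_flow (hα : Function.Involutive α) (a : X)
    (W : CWalk (fperm σ α) α) : faceFlow σ α a ⬝ᵥ W.flow = 0 := by
  rw [W.dotProduct_flow hα (faceFlow_isFlow hα a), faceFlow_eq_sub,
    W.sum_sub_comp_eq_zero fun _ _ => faceIndicator_eq_of_sameCycle a, mul_zero]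

theorem faceFlow_dotProduct_faceFlow_fperm (hα : Function.Involutive α) (a b : X) :
    faceFlow σ α a ⬝ᵥ faceFlow (fperm σ α) α b = 0 := by
  set G := fperm (fperm σ α) α
  set I := faceIndicator σ α a
  set J := faceIndicator (fperm σ α) α b
  have hI : ∀ d, I (α d) = I (G d) := fun d => by
    rw [show α d = fperm σ α (G d) by simp [G, fperm]]
    exact faceIndicator_eq_of_sameCycle a (Equiv.Perm.SameCycle.refl _ _).apply_left
  have hJ : ∀ d, J (G d) = J d := fun d =>
    faceIndicator_eq_of_sameCycle b (Equiv.Perm.SameCycle.refl _ _).apply_left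
  have hsum : ∑ d, (I d - I (α d)) * J d = 0 := by
    simp only [hI, sub_mul, Finset.sum_sub_distrib]
    rw [← Equiv.sum_comp G (fun d => I d * J d)]
    simp only [hJ, sub_self]
  rw [faceFlow_eq_sub (σ := fperm σ α), (faceFlow_isFlow hα a).dotProduct_sub_comp hα J]
  exact (congrArg (2 * ·) hsum).trans (mul_zero 2)

theorem sum_out_smul_faceIndicator {c : X → ℤ}
    (hc : ∀ x y, (fperm σ α).SameCycle x y → c x = c y) :
    ∑ F : Quotient (permSetoid (fperm σ α)), c F.out • faceIndicator σ α F.out = c := by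
  ext d
  rw [Finset.sum_apply, Finset.sum_eq_single (⟦d⟧ : Quotient (permSetoid (fperm σ α)))]
  · have hd : (fperm σ α).SameCycle (⟦d⟧ : Quotient (permSetoid (fperm σ α))).out d :=
      Quotient.mk_out (s := permSetoid (fperm σ α)) d
    simp [faceIndicator, hd, hc _ _ hd]
  · intro F _ hF
    have hd : ¬ (fperm σ α).SameCycle F.out d := fun h =>
      hF (by rw [← Quotient.out_eq F]; exact Quotient.sound h)
    simp [faceIndicator, hd]
  · simp

theorem coboundary_mem_facialSubgroup {c : X → ℤ}
    (hc : ∀ x y, (fperm σ α).SameCycle x y → c x = c y) :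
    (fun d => c d - c (α d)) ∈ facialSubgroup σ α := by
  have hδ : (fun d => c d - c (α d)) =
      ∑ F : Quotient (permSetoid (fperm σ α)), c F.out • faceFlow σ α F.out := by
    ext d
    conv_lhs => rw [← sum_out_smul_faceIndicator hc]
    simp [Finset.sum_apply, faceFlow_eq_sub, mul_sub, Finset.sum_sub_distrib]
  rw [hδ]
  exact sum_mem fun F _ => zsmul_mem (AddSubgroup.subset_closure (Set.mem_range_self F.out)) _

end FaceFlows

theorem IsHomologyBasis.dotProduct_flow_eq_zero {X : Type*} [Fintype X] {σ α : Equiv.Perm X}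
    {ι : Type*} [Fintype ι] {B : ι → CWalk σ α} (hB : IsHomologyBasis σ α B)
    {p : X → ℤ} (hF : ∀ a, p ⬝ᵥ faceFlow σ α a = 0) (hBp : ∀ i, p ⬝ᵥ (B i).flow = 0)
    (W : CWalk σ α) :
    p ⬝ᵥ W.flow = 0 := by
  obtain ⟨μ, hμ⟩ := hB W
  have hfacial : (W.flow - ∑ i, μ i • (B i).flow) ⬝ᵥ p = 0 :=
    dotProduct_eq_zero_of_mem_closure hμ (by rintro _ ⟨a, rfl⟩; rw [dotProduct_comm, hF])
  rw [dotProduct_comm, ← sub_add_cancel W.flow (∑ i, μ i • (B i).flow), add_dotProduct,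
    hfacial, zero_add, dotProduct_comm, dotProduct_sum]
  simp only [dotProduct_smul, hBp, smul_zero, Finset.sum_const_zero]

section Walks

variable {X : Type*} {σ α : Equiv.Perm X}

/-- `IsWalk σ α a b L`: the darts of `L` form a walk in the map `(σ, α)` from the vertex of `a`
to the vertex of `b`. -/
inductive IsWalk (σ α : Equiv.Perm X) : X → X → List X → Prop
  | nil {a b : X} : σ.SameCycle a b → IsWalk σ α a b []
  | cons {a b d : X} {L : List X} :
      σ.SameCycle a d → IsWalk σ α (α d) b L → IsWalk σ α a b (d :: L)

namespace IsWalk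

variable {a b c d : X} {L L' : List X}

theorem single (ha : σ.SameCycle a d) (hb : σ.SameCycle (α d) b) : IsWalk σ α a b [d] :=
  cons ha (nil hb)

theorem of_sameCycle_left (h : IsWalk σ α a b L) (ha : σ.SameCycle c a) :
    IsWalk σ α c b L := by
  cases h with
  | nil hab => exact nil (ha.trans hab)
  | cons had hL => exact cons (ha.trans had) hL

theorem of_sameCycle_right (h : IsWalk σ α a b L) (hb : σ.SameCycle b c) : IsWalk σ α a c L := by
  induction h with
  | nil hab => exact nil (hab.trans hb)
  | cons had _ ih => exact cons had (ih hb)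

theorem append (h : IsWalk σ α a b L) (h' : IsWalk σ α b c L') : IsWalk σ α a c (L ++ L') := by
  induction h with
  | nil hab => exact h'.of_sameCycle_left hab
  | cons had _ ih => exact cons had (ih h')

theorem reverse (hα : Function.Involutive α) (h : IsWalk σ α a b L) :
    IsWalk σ α b a (L.reverse.map α) := by
  induction h with
  | nil hab => exact nil hab.symm
  | @cons a b d L had _ ih =>
    have hlast : IsWalk σ α (α d) a [α d] := single (.refl _ _) (by rw [hα d]; exact had.symm)
    simpa using ih.append hlast

theorem sameCycle_getD (h : IsWalk σ α a b L) :
    σ.SameCycle a (L.getD 0 b) ∧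
      ∀ i (hi : i < L.length), σ.SameCycle (α L[i]) (L.getD (i + 1) b) := by
  induction h with
  | nil hab => exact ⟨hab, fun i hi => absurd hi (Nat.not_lt_zero i)⟩
  | cons had _ ih =>
    refine ⟨had, fun i hi => ?_⟩
    cases i with
    | zero => exact ih.1
    | succ i => exact ih.2 i (by simpa using hi)

theorem sum_map_eq_zero {f : X → ℤ} (hT : ∀ W : CWalk σ α, ∑ k, f (W.darts k) = 0)
    (h : IsWalk σ α a a L) : (L.map f).sum = 0 := by
  by_cases hne : L = []
  · simp [hne]
  have hpos : 0 < L.length := List.length_pos_iff.mpr hne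
  obtain ⟨h0, hstep⟩ := h.sameCycle_getD
  rw [List.getD_eq_getElem _ _ hpos] at h0
  let W : CWalk σ α := ⟨L.length, hpos, L.get, fun k => by
    have hk := hstep k k.isLt
    rcases Nat.lt_or_eq_of_le (k.isLt : (k : ℕ) + 1 ≤ L.length) with hlt | heq
    · rw [List.getD_eq_getElem _ _ hlt] at hk
      rwa [show cyclicNext hpos k = ⟨k + 1, hlt⟩ from Fin.ext (Nat.mod_eq_of_lt hlt)]
    · rw [List.getD_eq_default _ _ heq.ge] at hk
      rw [show cyclicNext hpos k = ⟨0, hpos⟩ from Fin.ext (by simp [cyclicNext, ← heq])]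
      exact hk.trans h0⟩
  have hW : (List.ofFn fun k : Fin L.length => f L[(k : ℕ)]).sum = 0 := by
    rw [List.sum_ofFn]; exact hT W
  rwa [List.ofFn_getElem_eq_map] at hW

theorem sum_map_eq (hα : Function.Involutive α) {ψ : X → ℤ} (hψ : IsFlow α ψ)
    (hT : ∀ W : CWalk σ α, ∑ k, ψ (W.darts k) = 0)
    (h : IsWalk σ α a b L) (h' : IsWalk σ α a b L') : (L.map ψ).sum = (L'.map ψ).sum := by
  have hloop := sum_map_eq_zero hT (h.append (h'.reverse hα))
  have hneg : ∀ l : List X, ((l.map α).map ψ).sum = -(l.map ψ).sum := fun l => by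
    induction l with
    | nil => simp
    | cons d l ih => simp only [List.map_cons, List.sum_cons, ih, hψ d, neg_add]
  rw [List.map_append, List.sum_append, hneg, List.map_reverse, List.sum_reverse] at hloop
  linarith

end IsWalk

theorem exists_potential_of_forall_sum_eq_zero (hα : Function.Involutive α)
    (hconn : ∀ a b, ∃ L, IsWalk σ α a b L) {ψ : X → ℤ} (hψ : IsFlow α ψ)
    (hT : ∀ W : CWalk σ α, ∑ k, ψ (W.darts k) = 0) :
    ∃ c : X → ℤ, (∀ x y, σ.SameCycle x y → c x = c y) ∧ ψ = fun d => c d - c (α d) := by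
  rcases isEmpty_or_nonempty X with hX | ⟨⟨b⟩⟩
  · exact ⟨0, fun x => isEmptyElim x, funext fun x => isEmptyElim x⟩
  choose L hL using hconn b
  refine ⟨fun d => -((L d).map ψ).sum, fun x y hxy => ?_, funext fun d => ?_⟩
  · simp only [IsWalk.sum_map_eq hα hψ hT ((hL x).of_sameCycle_right hxy) (hL y)]
  · have hαd := IsWalk.sum_map_eq hα hψ hT (hL (α d))
      ((hL d).append (.single (.refl _ _) (.refl _ _)))
    simp only [List.map_append, List.sum_append, List.map_singleton, List.sum_singleton] at hαd
    linarith

end Walks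

namespace CombMap

variable (M : CombMap)

theorem beta_eq_dotProduct (p q : M.D → ℤ) : M.beta p q = p ⬝ᵥ q := rfl

theorem exists_isWalk_dual (a b : M.D) : ∃ L, IsWalk M.facePerm M.α a b L := by
  induction M.connected a b with
  | rel x y hxy =>
    rcases hxy with rfl | rfl
    · refine ⟨[M.facePerm.symm x], .single ?_ ?_⟩
      · exact Equiv.Perm.sameCycle_symm_apply_right.mpr (.refl _ _)
      · rw [show M.α (M.facePerm.symm x) = M.σ x by
          simp [facePerm, fperm, ← Equiv.Perm.inv_def, mul_inv_rev]]
    · exact ⟨[x], .single (.refl _ _) (.refl _ _)⟩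
  | refl x => exact ⟨[], .nil (.refl _ _)⟩
  | symm x y _ ih =>
    obtain ⟨L, hL⟩ := ih
    exact ⟨_, hL.reverse M.α_invol⟩
  | trans x y z _ _ ih ih' =>
    obtain ⟨L, hL⟩ := ih
    obtain ⟨L', hL'⟩ := ih'
    exact ⟨_, hL.append hL'⟩

theorem mem_facialSubgroup_iff_forall_dotProduct_flow {ψ : M.D → ℤ} (hψ : IsFlow M.α ψ) :
    ψ ∈ facialSubgroup M.σ M.α ↔ ∀ W : CWalk M.facePerm M.α, ψ ⬝ᵥ W.flow = 0 := by
  refine ⟨fun h W => dotProduct_eq_zero_of_mem_closure h ?_, fun h => ?_⟩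
  · rintro _ ⟨a, rfl⟩
    exact faceFlow_dotProduct_flow M.α_invol a W
  have hT : ∀ W : CWalk M.facePerm M.α, ∑ k, ψ (W.darts k) = 0 := fun W => by
    simpa [W.dotProduct_flow M.α_invol hψ] using h W
  obtain ⟨c, hc, rfl⟩ :=
    exists_potential_of_forall_sum_eq_zero M.α_invol M.exists_isWalk_dual hψ hT
  exact coboundary_mem_facialSubgroup hc

end CombMap

theorem homologous_flows_characterization_general
    (M : CombMap) (g : ℕ)
    (B : Fin (2 * g) → CWalk M.facePerm M.α)
    (hB : IsHomologyBasis M.facePerm M.α B)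
    (φ φ' : M.D → ℤ) (hφ : IsFlow M.α φ) (hφ' : IsFlow M.α φ') :
    (Homologous M.σ M.α φ φ' ↔
        ∀ W : CWalk M.facePerm M.α, M.beta φ W.flow = M.beta φ' W.flow) ∧
    (Homologous M.σ M.α φ φ' ↔
        ((∀ d0 : M.D,
            M.beta φ (faceFlow M.facePerm M.α d0) = M.beta φ' (faceFlow M.facePerm M.α d0)) ∧
          ∀ i, M.beta φ (B i).flow = M.beta φ' (B i).flow)) := by
  have hβ : ∀ q, M.beta φ q = M.beta φ' q ↔ (φ - φ') ⬝ᵥ q = 0 := fun q => by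
    rw [sub_dotProduct, sub_eq_zero, M.beta_eq_dotProduct, M.beta_eq_dotProduct]
  have hψ : IsFlow M.α (φ - φ') := fun d => by
    simp only [Pi.sub_apply, hφ d, hφ' d, neg_sub_neg, neg_sub]
  have h12 : Homologous M.σ M.α φ φ' ↔ ∀ W : CWalk M.facePerm M.α, (φ - φ') ⬝ᵥ W.flow = 0 :=
    M.mem_facialSubgroup_iff_forall_dotProduct_flow hψ
  simp only [hβ]
  refine ⟨h12, h12.trans ⟨fun h => ⟨fun b => ?_, fun i => h (B i)⟩,
    fun ⟨hF, hBψ⟩ => hB.dotProduct_flow_eq_zero hF hBψ⟩⟩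
  refine dotProduct_eq_zero_of_mem_closure (h12.mpr h) ?_
  rintro _ ⟨a, rfl⟩
  exact faceFlow_dotProduct_faceFlow_fperm M.α_invol a b

/-- Let `G` be a map on an orientable surface of genus `g`
with a fixed reference orientation, let `F*` be the set of counterclockwise
facial walks of the dual map `G*`, and let `B*₁, …, B*₂g` be a set of cycles of
`G*` forming a homology-basis.  For two flows `φ, φ'` of `G`, the following are
equivalent: (1) `φ` and `φ'` are homologous; (2) `β(φ,W) = β(φ',W)` for every
closed walk `W` of `G*`; (3) `β(φ,F) = β(φ',F)` for every `F ∈ F*` and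
`β(φ,B*ᵢ) = β(φ',B*ᵢ)` for every `i`. -/
theorem homologous_flows_characterization
    (M : CombMap) (g : ℕ) (hgenus : M.eulerChar = 2 - 2 * (g : ℤ))
    (B : Fin (2 * g) → CWalk M.facePerm M.α) (hBc : ∀ i, (B i).IsCycle)
    (hB : IsHomologyBasis M.facePerm M.α B)
    (φ φ' : M.D → ℤ) (hφ : IsFlow M.α φ) (hφ' : IsFlow M.α φ') :
    (Homologous M.σ M.α φ φ' ↔
        ∀ W : CWalk M.facePerm M.α, M.beta φ W.flow = M.beta φ' W.flow) ∧
    (Homologous M.σ M.α φ φ' ↔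
        ((∀ d0 : M.D,
            M.beta φ (faceFlow M.facePerm M.α d0) = M.beta φ' (faceFlow M.facePerm M.α d0)) ∧
          ∀ i, M.beta φ (B i).flow = M.beta φ' (B i).flow)) :=
  homologous_flows_characterization_general M g B hB φ φ' hφ hφ'

end Schnyder
end
end

section
/- An oriented subgraph T of a map G on an orientable surface is partitionable if and only if it is a topological Tutte-orientation, i.e. β(T,W) ≡ 0 (mod 3) for every closed walk W of the dual map G*. -/
/-
Common combinatorial framework.

Maps on compact orientable surfaces are formalized as rotation systems
(combinatorial maps): a finite set of darts together with a permutation `σ`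
(counterclockwise successor around each vertex) and a fixed-point-free
involution `α` (reversal of darts).  Vertices are the orbits of `σ`, edges the
orbits of `α`, and the (counterclockwise) facial walks are the orbits of
`σ⁻¹ * α`.  The genus is recovered from the Euler characteristic.

Homology of the map is formalized by flows: integer-valued functions on darts;
the subgroup generated by the facial flows plays the role of the boundary
subgroup, two flows being homologous when their difference belongs to it.
Contractibility is formalized combinatorially: null-homotopy of closed walks is
generated by insertion/deletion of spurs and of facial boundaries (and rotation
of the base point).

Schnyder woods are formalized by their angle labellings (corners ≃ darts, the
corner of dart `d` being the corner between `d` and `σ d` at the tail of `d`);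
this follows the paper, where (generalized) Schnyder woods are exactly the
EDGE, ℕ*-VERTEX, ℕ*-FACE angle labellings, and where around an edge `{d, α d}`
the four corners in clockwise order are `d, σ⁻¹ (α d), α d, σ⁻¹ d`.
-/

noncomputable section
open scoped Classical

namespace Schnyder

/-
Pairing a flow `f` with a closed dual walk `W` gives twice the sum of `f` over the darts
crossed by `W`. For the flow `ψ - ψ ∘ α` of a function `ψ` constant on faces, this sum
telescopes to zero along `W`. Facial flows have this form, so homologous flows have the same
pairing with `W`, and a partition of `T` into three homologous parts gives
`β(T, W) = 3 β(T₀, W)`.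

Conversely, if `β(T, W) ≡ 0 (mod 3)` for every closed dual walk, then the signed number of
darts of `T` crossed by a closed dual path is divisible by 3 (`β` counts it twice), so the
number crossed by any dual path, taken mod 3, depends only on its endpoints. This gives a
potential `φ` from faces to `ℤ/3` that increases by one across each dart of `T`. Let `Tⱼ` be
the set of darts of `T` whose face has potential `j`. Then `Tⱼ - Tⱼ₊₁` is the flow
`ψ - ψ ∘ α` of the indicator `ψ` of `φ ≠ j + 1`, which is a combination of facial flows.
-/

theorem cyclicNext_injective {n : ℕ} (h : 0 < n) : Function.Injective (cyclicNext h) :=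
  fun k k' hkk' => Fin.ext <|
    (Nat.ModEq.add_right_cancel' 1 (congrArg Fin.val hkk')).eq_of_lt_of_lt k.isLt k'.isLt

theorem Homologous.trans {X : Type*} {σ α : Equiv.Perm X} {f g h : X → ℤ}
    (hfg : Homologous σ α f g) (hgh : Homologous σ α g h) : Homologous σ α f h := by
  simpa only [Homologous, sub_add_sub_cancel] using add_mem hfg hgh

namespace CombMap

variable (M : CombMap)

theorem alpha_eq_iff {d d' : M.D} : M.α d = d' ↔ d = M.α d' :=
  ⟨fun h => h ▸ (M.α_invol d).symm, fun h => h ▸ M.α_invol d'⟩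

theorem isFlow_sub_alpha (ψ : M.D → ℤ) : IsFlow M.α fun d => ψ d - ψ (M.α d) := fun d => by
  simp only [M.α_invol]
  ring

theorem setFlow_isFlow (S : Set M.D) : IsFlow M.α (M.setFlow S) :=
  M.isFlow_sub_alpha fun d => if d ∈ S then 1 else 0

theorem setFlow_union {A B : Set M.D} (h : Disjoint A B) :
    M.setFlow (A ∪ B) = M.setFlow A + M.setFlow B := by
  funext d
  have hAB := Set.disjoint_left.1 h
  simp only [setFlow, Pi.add_apply, Set.mem_union]
  split_ifs <;> simp_all

theorem beta_add_left (p p' q : M.D → ℤ) : M.beta (p + p') q = M.beta p q + M.beta p' q :=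
  add_dotProduct p p' q

theorem walkFlow_eq_sum (W : M.DualClosedWalk) :
    W.flow = ∑ k, (Pi.single (W.darts k) 1 - Pi.single (M.α (W.darts k)) 1) := by
  funext d
  simp only [CWalk.flow, Finset.sum_apply, Pi.sub_apply, Pi.single_apply]
  refine Finset.sum_congr rfl fun k _ => ?_
  simp only [eq_comm (a := d), ← alpha_eq_iff]

theorem beta_walkFlow (p : M.D → ℤ) (W : M.DualClosedWalk) :
    M.beta p W.flow = ∑ k, (p (W.darts k) - p (M.α (W.darts k))) := by
  simp [beta_eq_dotProduct, walkFlow_eq_sum, dotProduct_sum, dotProduct_sub, dotProduct_single]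

theorem beta_walkFlow_of_isFlow {p : M.D → ℤ} (hp : IsFlow M.α p) (W : M.DualClosedWalk) :
    M.beta p W.flow = 2 * ∑ k, p (W.darts k) := by
  rw [beta_walkFlow, Finset.mul_sum]
  exact Finset.sum_congr rfl fun k _ => by rw [hp]; ring

def FaceConstant {A : Type*} (ψ : M.D → A) : Prop := ∀ d d', M.SameFace d d' → ψ d = ψ d'

theorem sum_walk_sub_alpha_eq_zero {A : Type*} [AddCommGroup A] {ψ : M.D → A}
    (hψ : M.FaceConstant ψ) (W : M.DualClosedWalk) :
    ∑ k, (ψ (W.darts k) - ψ (M.α (W.darts k))) = 0 := by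
  have hnext : ∀ k, ψ (M.α (W.darts k)) = ψ (W.darts (cyclicNext W.pos k)) :=
    fun k => hψ _ _ (W.chain k)
  rw [Finset.sum_sub_distrib, Finset.sum_congr rfl fun k _ => hnext k,
    (cyclicNext_injective W.pos).bijective_of_finite.sum_comp (fun k => ψ (W.darts k)), sub_self]

def faceIndicator (d0 d : M.D) : ℤ := if M.SameFace d0 d then 1 else 0

theorem faceConstant_faceIndicator (d0 : M.D) : M.FaceConstant (M.faceIndicator d0) :=
  fun d d' h => by
    simp only [faceIndicator, show M.SameFace d0 d ↔ M.SameFace d0 d' from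
      ⟨fun h' => h'.trans h, fun h' => h'.trans h.symm⟩]

theorem faceFlow_eq_sub (d0 : M.D) :
    faceFlow M.σ M.α d0 = fun d => M.faceIndicator d0 d - M.faceIndicator d0 (M.α d) := by
  unfold faceFlow faceIndicator
  congr!

theorem beta_walkFlow_eq_zero_of_mem {f : M.D → ℤ} (hf : f ∈ facialSubgroup M.σ M.α)
    (W : M.DualClosedWalk) : M.beta f W.flow = 0 := by
  induction hf using AddSubgroup.closure_induction with
  | mem f hf =>
    obtain ⟨d0, rfl⟩ := hf
    rw [faceFlow_eq_sub, beta_walkFlow_of_isFlow M (M.isFlow_sub_alpha _),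
      sum_walk_sub_alpha_eq_zero M (M.faceConstant_faceIndicator d0), mul_zero]
  | zero => exact zero_dotProduct _
  | add f g _ _ hf hg => rw [beta_add_left, hf, hg, add_zero]
  | neg f _ hf => rw [beta_eq_dotProduct, neg_dotProduct, ← beta_eq_dotProduct, hf, neg_zero]

theorem beta_walkFlow_eq_of_homologous {f g : M.D → ℤ} (h : Homologous M.σ M.α f g)
    (W : M.DualClosedWalk) : M.beta f W.flow = M.beta g W.flow := by
  have := M.beta_walkFlow_eq_zero_of_mem h W
  rwa [beta_eq_dotProduct, sub_dotProduct, sub_eq_zero] at this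

theorem sub_alpha_mem_facialSubgroup {ψ : M.D → ℤ} (hψ : M.FaceConstant ψ) :
    (fun d => ψ d - ψ (M.α d)) ∈ facialSubgroup M.σ M.α := by
  let Q := Quotient (permSetoid M.facePerm)
  have hmk : ∀ (q : Q) d, M.SameFace q.out d ↔ q = ⟦d⟧ := fun q d =>
    (Quotient.eq (r := permSetoid M.facePerm)).symm.trans (by rw [Quotient.out_eq])
  have hdecomp : ∀ d, ψ d = ∑ q : Q, ψ q.out * M.faceIndicator q.out d := fun d => by
    rw [Fintype.sum_eq_single ⟦d⟧ fun q hq => by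
        rw [faceIndicator, if_neg ((hmk q d).not.2 hq), mul_zero],
      faceIndicator, if_pos ((hmk _ d).2 rfl), mul_one]
    exact (hψ _ _ (Quotient.mk_out (s := permSetoid M.facePerm) d)).symm
  have heq : (fun d => ψ d - ψ (M.α d)) = ∑ q : Q, ψ q.out • faceFlow M.σ M.α q.out := by
    funext d
    simp only [Finset.sum_apply, Pi.smul_apply, smul_eq_mul, faceFlow_eq_sub, mul_sub,
      Finset.sum_sub_distrib, ← hdecomp]
  rw [heq]
  exact AddSubgroup.sum_mem _ fun q _ =>
    AddSubgroup.zsmul_mem _ (AddSubgroup.subset_closure (Set.mem_range_self q.out)) _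

/-- `IsDualPath M L a b`: a walk of the dual map from the face of `a` to the face of `b`
crosses the darts of `L` in this order, crossing `d` from the face of `d` to that of `α d`. -/
def IsDualPath : List M.D → M.D → M.D → Prop
  | [], a, b => M.SameFace a b
  | d :: L, a, b => M.SameFace a d ∧ IsDualPath L (M.α d) b

variable {M}

theorem IsDualPath.congr_left {L : List M.D} {a a' b : M.D} (h : M.SameFace a' a)
    (hL : M.IsDualPath L a b) : M.IsDualPath L a' b :=
  match L, hL with
  | [], hL => h.trans hL
  | _ :: _, hL => ⟨h.trans hL.1, hL.2⟩

theorem IsDualPath.congr_right {L : List M.D} {a b b' : M.D} (h : M.SameFace b b')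
    (hL : M.IsDualPath L a b) : M.IsDualPath L a b' :=
  match L, hL with
  | [], hL => hL.trans h
  | _ :: _, hL => ⟨hL.1, hL.2.congr_right h⟩

theorem IsDualPath.append {L L' : List M.D} {a b c : M.D}
    (hL : M.IsDualPath L a b) (hL' : M.IsDualPath L' b c) : M.IsDualPath (L ++ L') a c :=
  match L, hL with
  | [], hL => hL'.congr_left hL
  | _ :: _, hL => ⟨hL.1, hL.2.append hL'⟩

theorem isDualPath_singleton (d : M.D) : M.IsDualPath [d] d (M.α d) :=
  ⟨.refl _ _, .refl _ _⟩

theorem IsDualPath.reverse {L : List M.D} {a b : M.D} (hL : M.IsDualPath L a b) :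
    M.IsDualPath (L.reverse.map M.α) b a :=
  match L, hL with
  | [], hL => hL.symm
  | d :: _, hL => by
    simpa using hL.2.reverse.append
      ((M.α_invol d ▸ isDualPath_singleton (M.α d)).congr_right hL.1.symm)

variable (M) in
theorem exists_isDualPath (a b : M.D) : ∃ L, M.IsDualPath L a b := by
  induction M.connected a b with
  | rel x y hxy =>
    rcases hxy with rfl | rfl
    · refine ⟨[M.facePerm⁻¹ x], ⟨-1, by simp⟩, ?_⟩
      show M.SameFace (M.α (M.facePerm⁻¹ x)) (M.σ x)
      rw [show M.α (M.facePerm⁻¹ x) = M.σ x by simp [facePerm, fperm]]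
    · exact ⟨[x], isDualPath_singleton x⟩
  | refl x => exact ⟨[], .refl _ _⟩
  | symm x y _ ih =>
    obtain ⟨L, hL⟩ := ih
    exact ⟨_, hL.reverse⟩
  | trans x y z _ _ ih₁ ih₂ =>
    obtain ⟨L, hL⟩ := ih₁
    obtain ⟨L', hL'⟩ := ih₂
    exact ⟨_, hL.append hL'⟩

theorem IsDualPath.sameFace_getElem : ∀ {L : List M.D} {a b : M.D}, M.IsDualPath L a b →
    ∀ i (hi : i + 1 < L.length), M.SameFace (M.α L[i]) L[i + 1]
  | _ :: _ :: _, _, _, hL, 0, _ => hL.2.1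
  | _ :: _ :: _, _, _, hL, i + 1, hi => hL.2.sameFace_getElem i (by simpa using hi)

theorem IsDualPath.sameFace_getLast : ∀ {L : List M.D} {a b : M.D}, M.IsDualPath L a b →
    (hne : L ≠ []) → M.SameFace (M.α (L.getLast hne)) b
  | [_], _, _, hL, _ => hL.2
  | _ :: _ :: _, _, _, hL, _ => hL.2.sameFace_getLast (List.cons_ne_nil _ _)

theorem IsDualPath.exists_dualClosedWalk {L : List M.D} {a : M.D} (hL : M.IsDualPath L a a)
    (hne : L ≠ []) :
    ∃ W : M.DualClosedWalk, ∀ p : M.D → ℤ, ∑ k, p (W.darts k) = (L.map p).sum := by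
  have hpos : 0 < L.length := List.length_pos_iff.2 hne
  refine ⟨⟨L.length, hpos, fun k => L[k], fun k => ?_⟩,
    fun p => Fin.sum_univ_fun_getElem L p⟩
  by_cases hk : (k : ℕ) + 1 < L.length
  · rw [show cyclicNext hpos k = ⟨k + 1, hk⟩ from Fin.ext (Nat.mod_eq_of_lt hk)]
    exact hL.sameFace_getElem k hk
  · have hlast : (k : ℕ) + 1 = L.length := by omega
    rw [show cyclicNext hpos k = ⟨0, hpos⟩ from Fin.ext (by simp [cyclicNext, hlast])]
    obtain ⟨d, L', rfl⟩ := List.exists_cons_of_ne_nil hne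
    have hend := hL.sameFace_getLast hne
    simp only [List.getLast_eq_getElem, ← hlast, Nat.add_sub_cancel] at hend
    exact hend.trans hL.1

variable (M) in
theorem exists_potential {A : Type*} [AddCommGroup A] (c : M.D → A)
    (hc : ∀ L a, M.IsDualPath L a a → (L.map c).sum = 0) :
    ∃ φ : M.D → A, M.FaceConstant φ ∧ ∀ d, φ (M.α d) = φ d + c d := by
  rcases isEmpty_or_nonempty M.D with hD | ⟨⟨b⟩⟩
  · exact ⟨0, fun d => isEmptyElim d, fun d => isEmptyElim d⟩
  have hanti : ∀ d, c (M.α d) = -c d := fun d => by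
    have := hc [d, M.α d] d ⟨.refl _ _, .refl _ _, (M.α_invol d).symm ▸ .refl _ _⟩
    exact eq_neg_of_add_eq_zero_right (by simpa using this)
  have hrev : ∀ L : List M.D, ((L.reverse.map M.α).map c).sum = -(L.map c).sum := fun L => by
    simp [Function.comp_def, hanti, List.sum_neg]
  choose P hP using M.exists_isDualPath b
  have hP_sum : ∀ d L, M.IsDualPath L b d → ((P d).map c).sum = (L.map c).sum :=
    fun d L hL => by
    have := hc _ _ ((hP d).append hL.reverse)
    rwa [List.map_append, List.sum_append, hrev, add_neg_eq_zero] at this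
  refine ⟨fun d => ((P d).map c).sum, fun d d' h => (hP_sum d' _ ((hP d).congr_right h)).symm,
    fun d => ?_⟩
  simp [hP_sum _ _ ((hP d).append (isDualPath_singleton d))]

variable (M) in
theorem exists_potential_of_three_dvd_beta {p : M.D → ℤ} (hp : IsFlow M.α p)
    (h : ∀ W : M.DualClosedWalk, (3 : ℤ) ∣ M.beta p W.flow) :
    ∃ φ : M.D → ZMod 3, M.FaceConstant φ ∧ ∀ d, φ (M.α d) = φ d + p d := by
  refine M.exists_potential _ fun L a hL => ?_
  rcases eq_or_ne L [] with rfl | hne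
  · rfl
  obtain ⟨W, hW⟩ := hL.exists_dualClosedWalk hne
  have h3 := h W
  rw [beta_walkFlow_of_isFlow M hp, hW] at h3
  have : (((L.map p).sum : ℤ) : ZMod 3) = 0 :=
    (ZMod.intCast_zmod_eq_zero_iff_dvd _ 3).2 (by omega)
  simpa [Int.cast_list_sum, Function.comp_def] using this

variable (M) in
theorem homologous_setFlow_level_succ {S : Set M.D} {φ : M.D → ZMod 3}
    (hface : M.FaceConstant φ) (hφ : ∀ d, φ (M.α d) = φ d + M.setFlow S d)
    (j : ZMod 3) :
    Homologous M.σ M.α (M.setFlow {d | d ∈ S ∧ φ d = j})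
      (M.setFlow {d | d ∈ S ∧ φ d = j + 1}) := by
  let ψ : M.D → ℤ := fun d => if φ d = j + 1 then 0 else 1
  have hψ : M.FaceConstant ψ := fun d d' h => by simp only [ψ, hface d d' h]
  rw [Homologous,
    show M.setFlow {d | d ∈ S ∧ φ d = j} - M.setFlow {d | d ∈ S ∧ φ d = j + 1}
      = fun d => ψ d - ψ (M.α d) from funext fun d => ?_]
  · exact M.sub_alpha_mem_facialSubgroup hψ
  have hαd := hφ d
  simp only [setFlow, Pi.sub_apply, Set.mem_ofPred_eq, ψ] at hαd ⊢
  by_cases hd : d ∈ S <;> by_cases ha : M.α d ∈ S <;> simp only [hd, ha] at hαd ⊢ <;>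
    push_cast at hαd <;> rw [hαd] <;> split_ifs <;> simp_all [add_neg_eq_iff_eq_add]

end CombMap

theorem partitionable_iff_topological_tutte_general
    (M : CombMap) (S : Set M.D) :
    (∃ T0 T1 T2 : Set M.D, T0 ∪ T1 ∪ T2 = S ∧
        Disjoint T0 T1 ∧ Disjoint T0 T2 ∧ Disjoint T1 T2 ∧
        Homologous M.σ M.α (M.setFlow T0) (M.setFlow T1) ∧
        Homologous M.σ M.α (M.setFlow T0) (M.setFlow T2) ∧
        Homologous M.σ M.α (M.setFlow T1) (M.setFlow T2)) ↔
      ∀ W : CWalk M.facePerm M.α, (3 : ℤ) ∣ M.beta (M.setFlow S) W.flow := by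
  constructor
  · rintro ⟨T0, T1, T2, rfl, h01, h02, h12, H01, H02, -⟩ W
    rw [M.setFlow_union (Set.disjoint_union_left.2 ⟨h02, h12⟩), M.setFlow_union h01,
      M.beta_add_left, M.beta_add_left, ← M.beta_walkFlow_eq_of_homologous H01 W,
      ← M.beta_walkFlow_eq_of_homologous H02 W]
    exact ⟨M.beta (M.setFlow T0) W.flow, by ring⟩
  · intro h
    obtain ⟨φ, hface, hφ⟩ := M.exists_potential_of_three_dvd_beta (M.setFlow_isFlow S) h
    have H01 := M.homologous_setFlow_level_succ hface hφ 0
    have H12 := M.homologous_setFlow_level_succ hface hφ 1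
    rw [zero_add] at H01
    rw [one_add_one_eq_two] at H12
    let T : ZMod 3 → Set M.D := fun j => {d | d ∈ S ∧ φ d = j}
    have hdisj : ∀ i j : ZMod 3, i ≠ j → Disjoint (T i) (T j) :=
      fun i j hij => Set.disjoint_left.2 fun d hi hj => hij (hi.2.symm.trans hj.2)
    refine ⟨T 0, T 1, T 2, ?_, hdisj 0 1 (by decide), hdisj 0 2 (by decide),
      hdisj 1 2 (by decide), H01, H01.trans H12, H12⟩
    ext d
    have := (by decide : ∀ x : ZMod 3, x = 0 ∨ x = 1 ∨ x = 2) (φ d)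
    simp only [T, Set.mem_union, Set.mem_ofPred_eq]
    tauto

/-- An oriented subgraph `T` of a map `G` on an orientable
surface is partitionable if and only if it is a topological Tutte-orientation,
i.e. `β(T,W) ≡ 0 (mod 3)` for every closed walk `W` of the dual map `G*`. -/
theorem partitionable_iff_topological_tutte
    (M : CombMap) (S : Set M.D) (hS : ∀ d ∈ S, M.α d ∉ S) :
    (∃ T0 T1 T2 : Set M.D, T0 ∪ T1 ∪ T2 = S ∧
        Disjoint T0 T1 ∧ Disjoint T0 T2 ∧ Disjoint T1 T2 ∧
        Homologous M.σ M.α (M.setFlow T0) (M.setFlow T1) ∧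
        Homologous M.σ M.α (M.setFlow T0) (M.setFlow T2) ∧
        Homologous M.σ M.α (M.setFlow T1) (M.setFlow T2)) ↔
      ∀ W : CWalk M.facePerm M.α, (3 : ℤ) ∣ M.beta (M.setFlow S) W.flow :=
  partitionable_iff_topological_tutte_general M S

end Schnyder
end
end
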